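/- arXiv:2408.13914 — 6 statements merged into one kernel-verified Lean document; each statement's English description precedes it below -/
import Mathlib

section
/- Let ν, σ, m, T, n_w, μ be positive integers and let 𝒜 ∈ ℝ^{ν×σ}, ℬ ∈ ℝ^{ν×m}, 𝒫 ∈ ℝ^{ν×n_w}, U₀ ∈ ℝ^{m×T}, 𝒵₀ ∈ ℝ^{σ×T}, 𝒵₁ ∈ ℝ^{ν×T}, 𝒯 ∈ ℝ^{n_w×n_w}, L ∈ ℝ^{n_w×μ}, M ∈ ℝ^{μ×T} be matrices satisfying the data-consistency relation 𝒵₁ = 𝒜𝒵₀ + ℬU₀ + 𝒫𝒯LM. Suppose K ∈ ℝ^{m×σ} and 𝒢 ∈ ℝ^{T×σ} satisfy U₀𝒢 = K, 𝒵₀𝒢 = I_σ, and M𝒢 = 0. Then 𝒵₁𝒢 = 𝒜 + ℬK. In particular, for every z ∈ ℝ^σ and w ∈ ℝ^{n_w}, 𝒜z + ℬ(Kz) + 𝒫𝒯w = 𝒵₁𝒢 z + 𝒫𝒯w, i.e., the closed-loop vector field of the system ż_state = 𝒜𝒵(z_state) + ℬu + 𝒫w under the feedback u = K𝒵(z_state)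 admits the data-based representation 𝒵₁𝒢 𝒵(z_state) + 𝒫w. -/
namespace Matrix

variable {R ι κ ρ τ ξ : Type*} [Semiring R] [Fintype κ] [DecidableEq κ] [Fintype ρ] [Fintype τ]
  [Fintype ξ]

theorem mul_eq_add_mul_of_right_inverse {A : Matrix ι κ R} {B : Matrix ι ρ R}
    {E : Matrix ι ξ R} {Z₀ : Matrix κ τ R} {Z₁ : Matrix ι τ R} {U₀ : Matrix ρ τ R}
    {M : Matrix ξ τ R} {K : Matrix ρ κ R} {G : Matrix τ κ R}
    (hdata : Z₁ = A * Z₀ + B * U₀ + E * M)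
    (hU : U₀ * G = K) (hZ : Z₀ * G = 1) (hM : M * G = 0) :
    Z₁ * G = A + B * K := by
  rw [hdata, Matrix.add_mul, Matrix.add_mul, Matrix.mul_assoc, Matrix.mul_assoc, Matrix.mul_assoc,
    hZ, hU, hM, Matrix.mul_one, Matrix.mul_zero, add_zero]

end Matrix

theorem stmt_3_general
    (ν σ m T n_w μ : ℕ)
    (𝒜 : Matrix (Fin ν) (Fin σ) ℝ) (ℬ : Matrix (Fin ν) (Fin m) ℝ)
    (Pm : Matrix (Fin ν) (Fin n_w) ℝ)
    (U₀ : Matrix (Fin m) (Fin T) ℝ) (𝒵₀ : Matrix (Fin σ) (Fin T) ℝ)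
    (𝒵₁ : Matrix (Fin ν) (Fin T) ℝ)
    (𝒯 : Matrix (Fin n_w) (Fin n_w) ℝ) (L : Matrix (Fin n_w) (Fin μ) ℝ)
    (M : Matrix (Fin μ) (Fin T) ℝ)
    (hdata : 𝒵₁ = 𝒜 * 𝒵₀ + ℬ * U₀ + Pm * 𝒯 * L * M)
    (K : Matrix (Fin m) (Fin σ) ℝ) (𝒢 : Matrix (Fin T) (Fin σ) ℝ)
    (hU : U₀ * 𝒢 = K) (hZ : 𝒵₀ * 𝒢 = 1) (hM : M * 𝒢 = 0) :
    𝒵₁ * 𝒢 = 𝒜 + ℬ * K ∧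
      ∀ (z : Fin σ → ℝ) (w : Fin n_w → ℝ),
        𝒜.mulVec z + ℬ.mulVec (K.mulVec z) + (Pm * 𝒯).mulVec w
          = (𝒵₁ * 𝒢).mulVec z + (Pm * 𝒯).mulVec w := by
  have hclosed : 𝒵₁ * 𝒢 = 𝒜 + ℬ * K := Matrix.mul_eq_add_mul_of_right_inverse hdata hU hZ hM
  refine ⟨hclosed, fun z w => ?_⟩
  rw [hclosed, Matrix.add_mulVec, Matrix.mulVec_mulVec]

/-- **Lemma 2 of the paper (data-dependent closed-loop representation).**
If the data satisfy `𝒵₁ = 𝒜 𝒵₀ + ℬ U₀ + Pm 𝒯 L M` (where `Pm` plays the role of `𝒫`)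
and `K, 𝒢` satisfy `U₀ 𝒢 = K`, `𝒵₀ 𝒢 = I`, `M 𝒢 = 0`, then `𝒵₁ 𝒢 = 𝒜 + ℬ K`, and the
closed-loop vector field admits the data-based representation. -/
theorem stmt_3
    (ν σ m T n_w μ : ℕ) (hν : 0 < ν) (hσ : 0 < σ) (hm : 0 < m) (hT : 0 < T)
    (hnw : 0 < n_w) (hμ : 0 < μ)
    (𝒜 : Matrix (Fin ν) (Fin σ) ℝ) (ℬ : Matrix (Fin ν) (Fin m) ℝ)
    (Pm : Matrix (Fin ν) (Fin n_w) ℝ)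
    (U₀ : Matrix (Fin m) (Fin T) ℝ) (𝒵₀ : Matrix (Fin σ) (Fin T) ℝ)
    (𝒵₁ : Matrix (Fin ν) (Fin T) ℝ)
    (𝒯 : Matrix (Fin n_w) (Fin n_w) ℝ) (L : Matrix (Fin n_w) (Fin μ) ℝ)
    (M : Matrix (Fin μ) (Fin T) ℝ)
    (hdata : 𝒵₁ = 𝒜 * 𝒵₀ + ℬ * U₀ + Pm * 𝒯 * L * M)
    (K : Matrix (Fin m) (Fin σ) ℝ) (𝒢 : Matrix (Fin T) (Fin σ) ℝ)
    (hU : U₀ * 𝒢 = K) (hZ : 𝒵₀ * 𝒢 = 1) (hM : M * 𝒢 = 0) :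
    𝒵₁ * 𝒢 = 𝒜 + ℬ * K ∧
      ∀ (z : Fin σ → ℝ) (w : Fin n_w → ℝ),
        𝒜.mulVec z + ℬ.mulVec (K.mulVec z) + (Pm * 𝒯).mulVec w
          = (𝒵₁ * 𝒢).mulVec z + (Pm * 𝒯).mulVec w :=
  stmt_3_general ν σ m T n_w μ 𝒜 ℬ Pm U₀ 𝒵₀ 𝒵₁ 𝒯 L M hdata K 𝒢 hU hZ hM
end

section
/- Let ν, σ, m, T, n_w, μ, d be positive integers and let 𝒜 ∈ ℝ^{ν×σ}, ℬ ∈ ℝ^{ν×m}, 𝒫 ∈ ℝ^{ν×n_w}, U₀ ∈ ℝ^{m×T}, 𝒵₀ ∈ ℝ^{σ×T}, 𝒵₁ ∈ ℝ^{ν×T}, 𝒯 ∈ ℝ^{n_w×n_w}, L ∈ ℝ^{n_w×μ}, M ∈ ℝ^{μ×T} satisfy 𝒵₁ = 𝒜𝒵₀ + ℬU₀ + 𝒫𝒯LM. Let 𝓜 ∈ ℝ^{d×T} be a matrix such that M = C𝓜 for some C ∈ ℝ^{μ×d} (i.e., every row of M lies in the row space of 𝓜). Suppose K ∈ ℝ^{m×σ}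 and 𝒢 ∈ ℝ^{T×σ} satisfy U₀𝒢 = K, 𝒵₀𝒢 = I_σ, and 𝓜𝒢 = 0. Then 𝒵₁𝒢 = 𝒜 + ℬK. -/
theorem stmt_4_general
    (ν σ m T n_w μ d : ℕ)
    (𝒜 : Matrix (Fin ν) (Fin σ) ℝ) (ℬ : Matrix (Fin ν) (Fin m) ℝ)
    (Pm : Matrix (Fin ν) (Fin n_w) ℝ)
    (U₀ : Matrix (Fin m) (Fin T) ℝ) (𝒵₀ : Matrix (Fin σ) (Fin T) ℝ)
    (𝒵₁ : Matrix (Fin ν) (Fin T) ℝ)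
    (𝒯 : Matrix (Fin n_w) (Fin n_w) ℝ) (L : Matrix (Fin n_w) (Fin μ) ℝ)
    (M : Matrix (Fin μ) (Fin T) ℝ)
    (hdata : 𝒵₁ = 𝒜 * 𝒵₀ + ℬ * U₀ + Pm * 𝒯 * L * M)
    (𝓜 : Matrix (Fin d) (Fin T) ℝ) (C : Matrix (Fin μ) (Fin d) ℝ)
    (hMC : M = C * 𝓜)
    (K : Matrix (Fin m) (Fin σ) ℝ) (𝒢 : Matrix (Fin T) (Fin σ) ℝ)
    (hU : U₀ * 𝒢 = K) (hZ : 𝒵₀ * 𝒢 = 1) (hM : 𝓜 * 𝒢 = 0) :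
    𝒵₁ * 𝒢 = 𝒜 + ℬ * K := by
  have hMG : M * 𝒢 = 0 := by rw [hMC, Matrix.mul_assoc, hM, Matrix.mul_zero]
  calc 𝒵₁ * 𝒢 = 𝒜 * (𝒵₀ * 𝒢) + ℬ * (U₀ * 𝒢) + Pm * 𝒯 * L * (M * 𝒢) := by
        simp only [hdata, Matrix.add_mul, Matrix.mul_assoc]
    _ = 𝒜 + ℬ * K := by rw [hZ, hU, hMG, Matrix.mul_one, Matrix.mul_zero, add_zero]

/-- **Corollary 1 of the paper.** Same as Lemma 2 but with the exogenous-mode matrix `M`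
replaced by a reduced matrix `𝓜` whose row space contains the rows of `M`
(i.e. `M = C 𝓜`); the constraint `M 𝒢 = 0` is reduced to `𝓜 𝒢 = 0`. -/
theorem stmt_4
    (ν σ m T n_w μ d : ℕ) (hν : 0 < ν) (hσ : 0 < σ) (hm : 0 < m) (hT : 0 < T)
    (hnw : 0 < n_w) (hμ : 0 < μ) (hd : 0 < d)
    (𝒜 : Matrix (Fin ν) (Fin σ) ℝ) (ℬ : Matrix (Fin ν) (Fin m) ℝ)
    (Pm : Matrix (Fin ν) (Fin n_w) ℝ)
    (U₀ : Matrix (Fin m) (Fin T) ℝ) (𝒵₀ : Matrix (Fin σ) (Fin T) ℝ)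
    (𝒵₁ : Matrix (Fin ν) (Fin T) ℝ)
    (𝒯 : Matrix (Fin n_w) (Fin n_w) ℝ) (L : Matrix (Fin n_w) (Fin μ) ℝ)
    (M : Matrix (Fin μ) (Fin T) ℝ)
    (hdata : 𝒵₁ = 𝒜 * 𝒵₀ + ℬ * U₀ + Pm * 𝒯 * L * M)
    (𝓜 : Matrix (Fin d) (Fin T) ℝ) (C : Matrix (Fin μ) (Fin d) ℝ)
    (hMC : M = C * 𝓜)
    (K : Matrix (Fin m) (Fin σ) ℝ) (𝒢 : Matrix (Fin T) (Fin σ) ℝ)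
    (hU : U₀ * 𝒢 = K) (hZ : 𝒵₀ * 𝒢 = 1) (hM : 𝓜 * 𝒢 = 0) :
    𝒵₁ * 𝒢 = 𝒜 + ℬ * K :=
  stmt_4_general ν σ m T n_w μ d 𝒜 ℬ Pm U₀ 𝒵₀ 𝒵₁ 𝒯 L M hdata 𝓜 C hMC K 𝒢 hU hZ hM
end

section
/- Let D > 0, let k be a positive integer, and set ω = k·2π/D. Let φ = [[0, ω], [−ω, 0]] ∈ ℝ^{2×2}, let N ∈ ℝ² be a nonzero vector, and let v : ℝ → ℝ be a continuous D-periodic function. Suppose ζ : ℝ → ℝ² is differentiable, D-periodic (ζ(t+D) = ζ(t) for all t), and satisfies ζ'(t) = φζ(t) + N v(t) for all t ∈ ℝ. Then ∫₀^D cos(ωt) v(t) dt = 0 and ∫₀^D sin(ωt) v(t) dt = 0; equivalently, ∫₀^D e^{iωt} v(t) dt = 0, i.e., the k-th Fourier coefficient of v vanishes. -/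
open Real intervalIntegral

/-!
Writing `z = ζ₀ + i ζ₁` and `c = N₀ + i N₁ ≠ 0`, the system becomes `z' = -iω z + c v`, so
`(e^{iωt} z)' = c e^{iωt} v`. Integrating over one period, `e^{iωD} = 1` and `z(D) = z(0)` give
`c ∫₀^D e^{iωt} v = 0`; the cosine and sine coefficients are its real and imaginary parts.
-/

noncomputable def finTwoToComplex : (Fin 2 → ℝ) →L[ℝ] ℂ :=
  LinearMap.toContinuousLinearMap (Complex.basisOneI.equivFun.symm : (Fin 2 → ℝ) →ₗ[ℝ] ℂ)

@[simp]
lemma finTwoToComplex_apply (x : Fin 2 → ℝ) : finTwoToComplex x = x 0 + x 1 * Complex.I := by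
  simp [finTwoToComplex, Module.Basis.equivFun_symm_apply, Fin.sum_univ_two]

lemma finTwoToComplex_eq_zero_iff {x : Fin 2 → ℝ} : finTwoToComplex x = 0 ↔ x = 0 :=
  Complex.basisOneI.equivFun.symm.map_eq_zero_iff

lemma finTwoToComplex_rotation_mulVec (ω : ℝ) (x : Fin 2 → ℝ) :
    finTwoToComplex ((Matrix.of ![![0, ω], ![-ω, 0]]).mulVec x) =
      -(Complex.I * ω) * finTwoToComplex x := by
  simp only [finTwoToComplex_apply, Matrix.mulVec, dotProduct, Fin.sum_univ_two, Matrix.of_apply,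
    Matrix.cons_val_zero, Matrix.cons_val_one, Matrix.cons_val_fin_one]
  push_cast
  linear_combination (ω * (x 1 : ℂ)) * Complex.I_sq

lemma hasDerivAt_cexp_mul_mul {a : ℂ} {f : ℝ → ℂ} {g : ℂ} {t : ℝ}
    (hf : HasDerivAt f (-a * f t + g) t) :
    HasDerivAt (fun s : ℝ => Complex.exp (a * s) * f s) (Complex.exp (a * t) * g) t := by
  have hexp : HasDerivAt (fun s : ℝ => Complex.exp (a * s)) (Complex.exp (a * t) * a) t := by
    simpa using (((hasDerivAt_id t).ofReal_comp).const_mul a).cexp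
  exact (hexp.mul hf).congr_deriv (by ring)

lemma integral_cexp_mul_eq_sub {a : ℂ} {f g : ℝ → ℂ} (hg : Continuous g)
    (hf : ∀ t, HasDerivAt f (-a * f t + g t) t) (b : ℝ) :
    ∫ t in (0:ℝ)..b, Complex.exp (a * t) * g t = Complex.exp (a * b) * f b - f 0 := by
  simpa using integral_eq_sub_of_hasDerivAt (fun t _ => hasDerivAt_cexp_mul_mul (hf t))
    ((by fun_prop : Continuous fun t : ℝ => Complex.exp (a * t) * g t).intervalIntegrable 0 b)

lemma cexp_I_mul_eq_one {ω D : ℝ} {k : ℤ} (h : ω * D = k * (2 * π)) :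
    Complex.exp (Complex.I * ω * D) = 1 := by
  have h' : Complex.I * ω * D = k * (2 * π * Complex.I) := by
    have := congrArg (fun x : ℝ => (x : ℂ)) h
    push_cast at this
    linear_combination Complex.I * this
  rw [h', Complex.exp_int_mul_two_pi_mul_I]

lemma integral_cexp_I_mul_mul_ofReal {ω a b : ℝ} {v : ℝ → ℝ} (hv : Continuous v) :
    ∫ t in a..b, Complex.exp (Complex.I * ω * t) * v t =
      ((∫ t in a..b, Real.cos (ω * t) * v t : ℝ) : ℂ) +
        ((∫ t in a..b, Real.sin (ω * t) * v t : ℝ) : ℂ) * Complex.I := by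
  have hexp : ∀ t : ℝ, Complex.exp (Complex.I * ω * t) * v t =
      ((Real.cos (ω * t) * v t : ℝ) : ℂ) + ((Real.sin (ω * t) * v t : ℝ) : ℂ) * Complex.I := by
    intro t
    rw [show Complex.I * ω * t = ((ω * t : ℝ) : ℂ) * Complex.I by push_cast; ring,
      Complex.exp_mul_I]
    push_cast
    ring
  rw [integral_congr (fun t _ => hexp t), integral_add, integral_mul_const, integral_ofReal,
    integral_ofReal]
  all_goals exact Continuous.intervalIntegrable (by fun_prop) a b

theorem stmt_5_general
    (D : ℝ) (hD : 0 < D) (k : ℕ) (ω : ℝ) (hω : ω = k * (2 * π / D))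
    (N : Fin 2 → ℝ) (hN : N ≠ 0)
    (v : ℝ → ℝ) (hv : Continuous v)
    (ζ : ℝ → Fin 2 → ℝ) (hζper : ∀ t, ζ (t + D) = ζ t)
    (hζ : ∀ t, HasDerivAt ζ ((Matrix.of ![![0, ω], ![-ω, 0]]).mulVec (ζ t) + v t • N) t) :
    ((∫ t in (0:ℝ)..D, Real.cos (ω * t) * v t) = 0 ∧
      (∫ t in (0:ℝ)..D, Real.sin (ω * t) * v t) = 0) ∧
      (∫ t in (0:ℝ)..D, Complex.exp (Complex.I * ω * t) * v t) = 0 := by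
  have hz : ∀ t, HasDerivAt (fun s => finTwoToComplex (ζ s))
      (-(Complex.I * ω) * finTwoToComplex (ζ t) + finTwoToComplex N * v t) t := fun t => by
    refine (finTwoToComplex.hasFDerivAt.comp_hasDerivAt t (hζ t)).congr_deriv ?_
    rw [map_add, map_smul, finTwoToComplex_rotation_mulVec, Complex.real_smul, mul_comm (v t : ℂ)]
  have hperiod : Complex.exp (Complex.I * ω * D) = 1 :=
    cexp_I_mul_eq_one (k := k) (by rw [hω]; field_simp; push_cast; ring)
  have hζD : ζ D = ζ 0 := by simpa using hζper 0
  have hcoeff :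
      finTwoToComplex N * ∫ t in (0:ℝ)..D, Complex.exp (Complex.I * ω * t) * v t = 0 := by
    rw [← integral_const_mul]
    simp_rw [mul_left_comm (finTwoToComplex N)]
    rw [integral_cexp_mul_eq_sub (by fun_prop) hz D, hperiod, one_mul, hζD, sub_self]
  have hfourier := (mul_eq_zero.1 hcoeff).resolve_left (finTwoToComplex_eq_zero_iff.not.2 hN)
  rw [integral_cexp_I_mul_mul_ofReal hv] at hfourier ⊢
  simpa [Complex.ext_iff] using hfourier

/-- **Part (i) of the Fourier lemma in the appendix of the paper.**
If the harmonic-oscillator block `ζ' = φ ζ + N v` (with `φ = [[0, ω], [−ω, 0]]`,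
`ω = k·2π/D`, `N ≠ 0`), driven by a continuous `D`-periodic signal `v`, admits a
differentiable `D`-periodic solution `ζ`, then the `k`-th Fourier coefficient of `v`
vanishes. -/
theorem stmt_5
    (D : ℝ) (hD : 0 < D) (k : ℕ) (hk : 1 ≤ k) (ω : ℝ) (hω : ω = k * (2 * π / D))
    (N : Fin 2 → ℝ) (hN : N ≠ 0)
    (v : ℝ → ℝ) (hv : Continuous v) (hvper : ∀ t, v (t + D) = v t)
    (ζ : ℝ → Fin 2 → ℝ) (hζper : ∀ t, ζ (t + D) = ζ t)
    (hζ : ∀ t, HasDerivAt ζ ((Matrix.of ![![0, ω], ![-ω, 0]]).mulVec (ζ t) + v t • N) t) :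
    ((∫ t in (0:ℝ)..D, Real.cos (ω * t) * v t) = 0 ∧
      (∫ t in (0:ℝ)..D, Real.sin (ω * t) * v t) = 0) ∧
      (∫ t in (0:ℝ)..D, Complex.exp (Complex.I * ω * t) * v t) = 0 :=
  stmt_5_general D hD k ω hω N hN v hv ζ hζper hζ
end

section
/- Let D > 0, let ℓ be a nonnegative integer, and set ω = 2π/D. Define φ ∈ ℝ^{(2ℓ+1)×(2ℓ+1)} as the block-diagonal matrix φ = block.diag(0, φ_1, …, φ_ℓ), where φ_k = [[0, kω], [−kω, 0]] ∈ ℝ^{2×2}, and define Γ ∈ ℝ^{2ℓ+1} as Γ = col(γ, N, …, N) with γ ∈ ℝ \ {0} and N ∈ ℝ² \ {0}. Suppose η : ℝ → ℝ^{2ℓ+1} is differentiable and D-periodic, e : ℝ → ℝ is continuous and D-periodic, and η'(t) = φ η(t) + Γ e(t) for all t ∈ ℝ. Then ∫₀^D e(t) dt = 0, and for every k ∈ {1, …, ℓ}: ∫₀^D cos(kωt) e(t) dt = 0 and ∫₀^D sin(kωt) e(t) dt = 0. That is, the first ℓ+1 Fourier coefficients of e vanish. -/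
open Real

/-- One channel of the internal model of the paper: the `(2ℓ+1) × (2ℓ+1)` block-diagonal
matrix `φ = block.diag(0, φ_1, …, φ_ℓ)` with `φ_k = [[0, kω], [−kω, 0]]`.
Index `0` is the integrator; indices `2k−1, 2k` form the `k`-th oscillator block. -/
noncomputable def intModelPhi (ℓ : ℕ) (ω : ℝ) : Matrix (Fin (2 * ℓ + 1)) (Fin (2 * ℓ + 1)) ℝ :=
  Matrix.of fun i j =>
    if (i : ℕ) = 0 ∨ (j : ℕ) = 0 then 0
    else if ((i : ℕ) + 1) / 2 = ((j : ℕ) + 1) / 2 then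
      if (i : ℕ) % 2 = 1 ∧ (j : ℕ) % 2 = 0 then ((((i : ℕ) + 1) / 2 : ℕ) : ℝ) * ω
      else if (i : ℕ) % 2 = 0 ∧ (j : ℕ) % 2 = 1 then -(((((i : ℕ) + 1) / 2 : ℕ) : ℝ) * ω)
      else 0
    else 0

/-- The input vector `Γ = col(γ, N, …, N) ∈ ℝ^{2ℓ+1}` of one channel of the internal model. -/
def intModelGamma (ℓ : ℕ) (γ : ℝ) (N : Fin 2 → ℝ) : Fin (2 * ℓ + 1) → ℝ :=
  fun i => if (i : ℕ) = 0 then γ else if (i : ℕ) % 2 = 1 then N 0 else N 1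

/-!
The integrator coordinate satisfies `η₀' = γ e`, so `γ ∫₀^D e = η₀(D) - η₀(0) = 0`.
For the `k`-th oscillator block, `z = η_{2k-1} + i η_{2k}` solves `z' = -ikω z + (N₀ + i N₁) e`,
hence `(e^{ikωt} z)' = (N₀ + i N₁) e^{ikωt} e(t)`. Since `e^{ikωD} = 1` and `z` is `D`-periodic,
`∫₀^D e^{ikωt} e(t) dt = 0`; its real and imaginary parts are the cosine and sine coefficients.
-/

open Complex MeasureTheory

theorem hasDerivAt_ofReal_add_ofReal_mul_I {a b : ℝ → ℝ} {a' b' t : ℝ}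
    (ha : HasDerivAt a a' t) (hb : HasDerivAt b b' t) :
    HasDerivAt (fun s => (a s : ℂ) + b s * I) (a' + b' * I) t :=
  ha.ofReal_comp.add (hb.ofReal_comp.mul_const I)

theorem integral_exp_mul_I_mul_ofReal (c a b : ℝ) {e : ℝ → ℝ} (he : Continuous e) :
    ∫ t in a..b, exp (c * t * I) * e t =
      ((∫ t in a..b, Real.cos (c * t) * e t : ℝ) : ℂ) +
        ((∫ t in a..b, Real.sin (c * t) * e t : ℝ) : ℂ) * I := by
  have hcos : IntervalIntegrable (fun t => ((Real.cos (c * t) * e t : ℝ) : ℂ)) volume a b :=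
    (by fun_prop : Continuous _).intervalIntegrable a b
  have hsin : IntervalIntegrable (fun t => ((Real.sin (c * t) * e t : ℝ) : ℂ) * I) volume a b :=
    (by fun_prop : Continuous _).intervalIntegrable a b
  rw [← intervalIntegral.integral_ofReal, ← intervalIntegral.integral_ofReal,
    ← intervalIntegral.integral_mul_const, ← intervalIntegral.integral_add hcos hsin]
  congr 1 with t
  rw [← ofReal_mul, exp_mul_I, ← ofReal_cos, ← ofReal_sin]
  push_cast
  ring

theorem integral_exp_mul_I_mul_eq_zero_of_hasDerivAt {z : ℝ → ℂ} {e : ℝ → ℝ} {c D : ℝ} {ν : ℂ}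
    (he : Continuous e) (hz : ∀ t, HasDerivAt z (-(c * I) * z t + ν * e t) t)
    (hzD : z D = z 0) (hcD : exp (c * D * I) = 1) (hν : ν ≠ 0) :
    ∫ t in (0 : ℝ)..D, exp (c * t * I) * e t = 0 := by
  have hw : ∀ t : ℝ,
      HasDerivAt (fun s : ℝ => exp (c * s * I) * z s) (ν * (exp (c * t * I) * e t)) t := by
    intro t
    have hexp : HasDerivAt (fun s : ℝ => exp (c * s * I)) (exp (c * t * I) * (c * I)) t := by
      simpa using (((hasDerivAt_id (t : ℂ)).const_mul (c : ℂ)).mul_const I).cexp.comp_ofReal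
    exact (hexp.mul (hz t)).congr_deriv (by ring)
  have hint : IntervalIntegrable (fun t => ν * (exp (c * t * I) * e t)) volume 0 D :=
    (by fun_prop : Continuous _).intervalIntegrable 0 D
  have hftc := intervalIntegral.integral_eq_sub_of_hasDerivAt (fun t _ => hw t) hint
  rw [intervalIntegral.integral_const_mul, hzD, hcD] at hftc
  simpa [hν] using hftc

section InternalModel

variable {ℓ : ℕ} {ω : ℝ}

theorem intModelPhi_zero : intModelPhi ℓ ω 0 = 0 := by
  ext j
  simp [intModelPhi]

theorem intModelPhi_odd {k : ℕ} (hk₁ : 1 ≤ k) (hk₂ : k ≤ ℓ) :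
    intModelPhi ℓ ω ⟨2 * k - 1, by omega⟩ = Pi.single ⟨2 * k, by omega⟩ (k * ω) := by
  ext ⟨j, hj⟩
  simp only [intModelPhi, Matrix.of_apply, Pi.single_apply, Fin.ext_iff]
  split_ifs <;> first | rfl | omega | (congr; omega)

theorem intModelPhi_even {k : ℕ} (hk₁ : 1 ≤ k) (hk₂ : k ≤ ℓ) :
    intModelPhi ℓ ω ⟨2 * k, by omega⟩ = Pi.single ⟨2 * k - 1, by omega⟩ (-(k * ω)) := by
  ext ⟨j, hj⟩
  simp only [intModelPhi, Matrix.of_apply, Pi.single_apply, Fin.ext_iff]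
  split_ifs <;> first | rfl | omega | (congr; omega)

variable {γ : ℝ} {N : Fin 2 → ℝ} {e : ℝ → ℝ} {η : ℝ → Fin (2 * ℓ + 1) → ℝ}

theorem hasDerivAt_intModel_integrator
    (hη : ∀ t, HasDerivAt η ((intModelPhi ℓ ω).mulVec (η t) + e t • intModelGamma ℓ γ N) t)
    (t : ℝ) : HasDerivAt (fun s => η s 0) (γ * e t) t := by
  refine (hasDerivAt_pi.1 (hη t) 0).congr_deriv ?_
  simp [Matrix.mulVec, intModelPhi_zero, intModelGamma, mul_comm]

theorem hasDerivAt_intModel_oscillator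
    (hη : ∀ t, HasDerivAt η ((intModelPhi ℓ ω).mulVec (η t) + e t • intModelGamma ℓ γ N) t)
    {k : ℕ} (hk₁ : 1 ≤ k) (hk₂ : k ≤ ℓ) (t : ℝ) :
    HasDerivAt (fun s => (η s ⟨2 * k - 1, by omega⟩ : ℂ) + η s ⟨2 * k, by omega⟩ * I)
      (-(k * ω * I) * ((η t ⟨2 * k - 1, by omega⟩ : ℂ) + η t ⟨2 * k, by omega⟩ * I) +
        (N 0 + N 1 * I) * e t) t := by
  have hodd := hasDerivAt_pi.1 (hη t) ⟨2 * k - 1, by omega⟩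
  have heven := hasDerivAt_pi.1 (hη t) ⟨2 * k, by omega⟩
  simp only [Pi.add_apply, Matrix.mulVec, intModelPhi_odd hk₁ hk₂, intModelPhi_even hk₁ hk₂,
    single_dotProduct, Pi.smul_apply, intModelGamma, smul_eq_mul] at hodd heven
  rw [if_neg (by omega), if_pos (by omega)] at hodd
  rw [if_neg (by omega), if_neg (by omega)] at heven
  refine (hasDerivAt_ofReal_add_ofReal_mul_I hodd heven).congr_deriv ?_
  push_cast
  linear_combination (k * ω * η t ⟨2 * k, by omega⟩ : ℂ) * I_sq

end InternalModel

theorem stmt_8_general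
    (D : ℝ) (hD : 0 < D) (ℓ : ℕ) (ω : ℝ) (hω : ω = 2 * π / D)
    (γ : ℝ) (hγ : γ ≠ 0) (N : Fin 2 → ℝ) (hN : N ≠ 0)
    (e : ℝ → ℝ) (he : Continuous e)
    (η : ℝ → Fin (2 * ℓ + 1) → ℝ) (hηper : ∀ t, η (t + D) = η t)
    (hη : ∀ t, HasDerivAt η
      ((intModelPhi ℓ ω).mulVec (η t) + e t • intModelGamma ℓ γ N) t) :
    (∫ t in (0:ℝ)..D, e t) = 0 ∧
      ∀ k : ℕ, 1 ≤ k → k ≤ ℓ →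
        (∫ t in (0:ℝ)..D, Real.cos (k * ω * t) * e t) = 0 ∧
        (∫ t in (0:ℝ)..D, Real.sin (k * ω * t) * e t) = 0 := by
  have hηD : η D = η 0 := by simpa using hηper 0
  refine ⟨?_, fun k hk₁ hk₂ => ?_⟩
  · have hftc := intervalIntegral.integral_eq_sub_of_hasDerivAt
      (fun t _ => hasDerivAt_intModel_integrator hη t) ((he.const_mul γ).intervalIntegrable 0 D)
    rw [hηD, sub_self, intervalIntegral.integral_const_mul] at hftc
    exact (mul_eq_zero.1 hftc).resolve_left hγ
  · have hν : (N 0 : ℂ) + N 1 * I ≠ 0 := by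
      contrapose! hN
      ext i
      fin_cases i <;> simp [Complex.ext_iff] at hN ⊢ <;> tauto
    have hkωD : exp ((k * ω : ℝ) * D * I) = 1 :=
      Complex.exp_eq_one_iff.2 ⟨k, by rw [hω]; push_cast; field_simp [hD.ne']⟩
    have hcoeff := integral_exp_mul_I_mul_eq_zero_of_hasDerivAt he
      (by exact_mod_cast hasDerivAt_intModel_oscillator hη hk₁ hk₂) (by rw [hηD]) hkωD hν
    rw [integral_exp_mul_I_mul_ofReal _ _ _ he] at hcoeff
    simpa [Complex.ext_iff] using hcoeff

/-- **Key intermediate step of Theorem 1 of the paper.** If the internal-model channel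
`η' = φη + Γe` (integrator plus `ℓ` harmonic oscillators at frequencies `kω`, `ω = 2π/D`),
driven by a continuous `D`-periodic error `e`, admits a differentiable `D`-periodic
solution `η`, then the first `ℓ+1` Fourier coefficients of `e` vanish. -/
theorem stmt_8
    (D : ℝ) (hD : 0 < D) (ℓ : ℕ) (ω : ℝ) (hω : ω = 2 * π / D)
    (γ : ℝ) (hγ : γ ≠ 0) (N : Fin 2 → ℝ) (hN : N ≠ 0)
    (e : ℝ → ℝ) (he : Continuous e) (heper : ∀ t, e (t + D) = e t)
    (η : ℝ → Fin (2 * ℓ + 1) → ℝ) (hηper : ∀ t, η (t + D) = η t)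
    (hη : ∀ t, HasDerivAt η
      ((intModelPhi ℓ ω).mulVec (η t) + e t • intModelGamma ℓ γ N) t) :
    (∫ t in (0:ℝ)..D, e t) = 0 ∧
      ∀ k : ℕ, 1 ≤ k → k ≤ ℓ →
        (∫ t in (0:ℝ)..D, Real.cos (k * ω * t) * e t) = 0 ∧
        (∫ t in (0:ℝ)..D, Real.sin (k * ω * t) * e t) = 0 :=
  stmt_8_general D hD ℓ ω hω γ hγ N hN e he η hηper hη
end

section
/- Let D > 0, let ℓ be a nonnegative integer, and set ω = 2π/D. Let φ = block.diag(0, φ_1, …, φ_ℓ) ∈ ℝ^{(2ℓ+1)×(2ℓ+1)} with φ_k = [[0, kω], [−kω, 0]], and Γ = col(γ, N, …, N) ∈ ℝ^{2ℓ+1} with γ ∈ ℝ \ {0} and N ∈ ℝ² \ {0}. Suppose η : ℝ → ℝ^{2ℓ+1} is differentiable and D-periodic, e : ℝ → ℝ is continuously differentiable and D-periodic with |e'(t)| ≤ ē for all t ∈ [0, D] for some ē ≥ 0, and η'(t) = φ η(t) + Γ e(t) for all t ∈ ℝ. Then (1/D)∫₀^D e(t)² dt ≤ ē² / ( (2π/D)²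 (ℓ+1)² ). -/
/-!
Each block of the internal model kills some Fourier coefficients of `e` on `[0, D]`.
Integrating the integrator component over a period gives `∫ e = 0`. For the `k`-th oscillator
`(u, v)`, the complex combination `z = u ∓ i v` solves `z' = ± i k ω z + (N₀ ∓ i N₁) e`, and
comparing Fourier coefficients of both sides (a periodic `z` has `ẑ'(n) = (2π i n / D) ẑ(n)`)
leaves `(N₀ ∓ i N₁) ê(± k) = 0`. So `ê(n) = 0` for `|n| ≤ ℓ`; since `ê'(n) = (2π i n / D) ê(n)`,
Parseval for `e` and `e'` gives the Wirtinger-type bound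
`∫ e² ≤ (D / (2π (ℓ + 1)))² ∫ e'² ≤ (D / (2π (ℓ + 1)))² D ē²`.
-/

open Real

open MeasureTheory Set Complex intervalIntegral Matrix

theorem ContinuousOn.memLp_restrict_Ioc {E : Type*} [NormedAddCommGroup E] {f : ℝ → E}
    {a b : ℝ} (hf : ContinuousOn f (Icc a b)) (p : ENNReal) :
    MemLp f p (volume.restrict (Ioc a b)) := by
  obtain ⟨C, hC⟩ := isCompact_Icc.exists_bound_of_continuousOn hf
  refine MemLp.of_bound ((hf.mono Ioc_subset_Icc_self).aestronglyMeasurable measurableSet_Ioc) C ?_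
  exact (ae_restrict_iff' measurableSet_Ioc).2
    (ae_of_all _ fun x hx => hC x (Ioc_subset_Icc_self hx))

theorem fourierCoeffOn_add {a b : ℝ} (hab : a < b) {f g : ℝ → ℂ}
    (hf : IntervalIntegrable f volume a b) (hg : IntervalIntegrable g volume a b) (n : ℤ) :
    fourierCoeffOn hab (fun x => f x + g x) n =
      fourierCoeffOn hab f n + fourierCoeffOn hab g n := by
  have hfourier : ContinuousOn (fun x : ℝ => fourier (-n) (x : AddCircle (b - a))) (uIcc a b) :=
    ((fourier (-n)).continuous.comp (AddCircle.continuous_mk' _)).continuousOn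
  simp only [fourierCoeffOn_eq_integral, smul_eq_mul, mul_add]
  rw [integral_add (hf.continuousOn_mul hfourier) (hg.continuousOn_mul hfourier), smul_add]

theorem fourierCoeffOn_deriv_of_endpoints_eq {a b : ℝ} (hab : a < b) {f f' : ℝ → ℂ}
    (hf : ∀ x ∈ uIcc a b, HasDerivAt f (f' x) x) (hf' : IntervalIntegrable f' volume a b)
    (hfab : f a = f b) (n : ℤ) :
    fourierCoeffOn hab f' n = 2 * π * I * n / (b - a) * fourierCoeffOn hab f n := by
  rcases eq_or_ne n 0 with rfl | hn
  · rw [fourierCoeffOn_eq_integral]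
    simp [integral_eq_sub_of_hasDerivAt hf hf', hfab]
  · have hba : (b : ℂ) - a ≠ 0 := sub_ne_zero.2 (ofReal_injective.ne hab.ne')
    have hπ : (π : ℂ) ≠ 0 := ofReal_ne_zero.2 pi_ne_zero
    rw [fourierCoeffOn_of_hasDerivAt hab hn hf hf', hfab, sub_self, mul_zero, zero_sub]
    field_simp

theorem fourierCoeffOn_eq_zero_of_hasDerivAt {a b : ℝ} (hab : a < b) {z g : ℝ → ℂ} {M : ℂ}
    (hM : M ≠ 0) {n : ℤ}
    (hz : ∀ x ∈ uIcc a b, HasDerivAt z (2 * π * I * n / (b - a) * z x + M * g x) x)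
    (hg : IntervalIntegrable g volume a b) (hzab : z a = z b) :
    fourierCoeffOn hab g n = 0 := by
  have hzi : IntervalIntegrable z volume a b :=
    ContinuousOn.intervalIntegrable fun x hx => (hz x hx).continuousAt.continuousWithinAt
  have hderiv := fourierCoeffOn_deriv_of_endpoints_eq hab hz
    ((hzi.const_mul _).add (hg.const_mul M)) hzab n
  rw [fourierCoeffOn_add hab (hzi.const_mul _) (hg.const_mul M), fourierCoeffOn.const_mul,
    fourierCoeffOn.const_mul, add_eq_left] at hderiv
  exact (mul_eq_zero.1 hderiv).resolve_left hM

theorem integral_norm_sq_le_of_fourierCoeffOn_eq_zero {a b : ℝ} (hab : a < b) {f f' : ℝ → ℂ}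
    {ℓ : ℕ} (hf : ∀ x ∈ uIcc a b, HasDerivAt f (f' x) x)
    (hf' : MemLp f' 2 (volume.restrict (Ioc a b))) (hfab : f a = f b)
    (hlow : ∀ n : ℤ, n.natAbs ≤ ℓ → fourierCoeffOn hab f n = 0) :
    ∫ x in a..b, ‖f x‖ ^ 2 ≤ ((b - a) / (2 * π * (ℓ + 1))) ^ 2 * ∫ x in a..b, ‖f' x‖ ^ 2 := by
  have hf'i : IntervalIntegrable f' volume a b :=
    (intervalIntegrable_iff_integrableOn_Ioc_of_le hab.le).2 (hf'.integrable one_le_two)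
  have hfc : ContinuousOn f (Icc a b) := fun x hx =>
    (hf x (Icc_subset_uIcc hx)).continuousAt.continuousWithinAt
  set K := ((b - a) / (2 * π * (ℓ + 1))) ^ 2
  have hterm (n : ℤ) : ‖fourierCoeffOn hab f n‖ ^ 2 ≤ K * ‖fourierCoeffOn hab f' n‖ ^ 2 := by
    rcases le_or_gt n.natAbs ℓ with hn | hn
    · rw [hlow n hn, norm_zero, zero_pow two_ne_zero]
      positivity
    have hnorm : ‖2 * π * I * n / (b - a)‖ = 2 * π * |(n : ℝ)| / (b - a) := by
      have hba : ‖(b : ℂ) - a‖ = b - a := by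
        rw [← ofReal_sub, norm_real, Real.norm_of_nonneg (sub_pos.2 hab).le]
      simp [hba, abs_of_pos pi_pos]
    have hgain : 1 ≤ K * (2 * π * |(n : ℝ)| / (b - a)) ^ 2 := by
      have hK : K * (2 * π * |(n : ℝ)| / (b - a)) ^ 2 = (|(n : ℝ)| / (ℓ + 1)) ^ 2 := by
        simp only [K]
        field_simp [pi_ne_zero, (sub_pos.2 hab).ne']
      rw [hK, one_le_sq_iff_one_le_abs, abs_of_nonneg (by positivity),
        one_le_div (by positivity), ← Int.cast_abs, ← Int.natCast_natAbs]
      exact_mod_cast hn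
    rw [fourierCoeffOn_deriv_of_endpoints_eq hab hf hf'i hfab n, norm_mul, mul_pow, hnorm,
      ← mul_assoc]
    exact le_mul_of_one_le_left (sq_nonneg _) hgain
  have hsum := hasSum_le hterm (hasSum_sq_fourierCoeffOn hab (hfc.memLp_restrict_Ioc 2))
    ((hasSum_sq_fourierCoeffOn hab hf').mul_left K)
  rw [smul_eq_mul, smul_eq_mul, mul_left_comm] at hsum
  exact (mul_le_mul_iff_of_pos_left (inv_pos.2 (sub_pos.2 hab))).1 hsum

theorem fourierCoeffOn_eq_zero_of_oscillator {a b : ℝ} (hab : a < b) {u v g : ℝ → ℝ} {p q : ℝ}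
    (hpq : p ≠ 0 ∨ q ≠ 0) {n : ℤ}
    (hu : ∀ x ∈ uIcc a b, HasDerivAt u (2 * π * n / (b - a) * v x + p * g x) x)
    (hv : ∀ x ∈ uIcc a b, HasDerivAt v (-(2 * π * n / (b - a)) * u x + q * g x) x)
    (hg : IntervalIntegrable g volume a b) (hua : u a = u b) (hva : v a = v b) :
    fourierCoeffOn hab (fun x => (g x : ℂ)) n = 0 := by
  have hM : (p : ℂ) - I * q ≠ 0 := by
    simpa [Complex.ext_iff, or_iff_not_imp_left] using hpq
  refine fourierCoeffOn_eq_zero_of_hasDerivAt hab (z := fun x => (u x : ℂ) - I * v x) hM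
    (fun x hx => ?_) ⟨hg.1.ofReal, hg.2.ofReal⟩ (by simp only [hua, hva])
  refine ((hu x hx).ofReal_comp.sub ((hv x hx).ofReal_comp.const_mul I)).congr_deriv ?_
  push_cast
  linear_combination (2 * π * n / (b - a) * v x : ℂ) * I_sq

theorem intModelPhi_mulVec_zero (ℓ : ℕ) (ω : ℝ) (x : Fin (2 * ℓ + 1) → ℝ) :
    (intModelPhi ℓ ω *ᵥ x) 0 = 0 := by
  simp [Matrix.mulVec, dotProduct, intModelPhi]

theorem intModelPhi_mulVec_odd {ℓ k : ℕ} (hk : k < ℓ) (ω : ℝ) (x : Fin (2 * ℓ + 1) → ℝ) :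
    (intModelPhi ℓ ω *ᵥ x) ⟨2 * k + 1, by omega⟩ = (k + 1) * ω * x ⟨2 * k + 2, by omega⟩ := by
  rw [Matrix.mulVec, dotProduct,
    Finset.sum_eq_single_of_mem ⟨2 * k + 2, by omega⟩ (Finset.mem_univ _)]
  · simp [intModelPhi, show (2 * k + 2 + 1) / 2 = k + 1 by omega,
      show (2 * k + 1 + 1) / 2 = k + 1 by omega]
  · intro j _ hj
    have hj' : (j : ℕ) ≠ 2 * k + 2 := fun h => hj (Fin.ext h)
    simp only [intModelPhi, Matrix.of_apply]
    split_ifs <;> first | omega | simp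

theorem intModelPhi_mulVec_even {ℓ k : ℕ} (hk : k < ℓ) (ω : ℝ) (x : Fin (2 * ℓ + 1) → ℝ) :
    (intModelPhi ℓ ω *ᵥ x) ⟨2 * k + 2, by omega⟩ = -((k + 1) * ω) * x ⟨2 * k + 1, by omega⟩ := by
  rw [Matrix.mulVec, dotProduct,
    Finset.sum_eq_single_of_mem ⟨2 * k + 1, by omega⟩ (Finset.mem_univ _)]
  · simp [intModelPhi, show (2 * k + 2 + 1) / 2 = k + 1 by omega,
      show (2 * k + 1 + 1) / 2 = k + 1 by omega]
  · intro j _ hj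
    have hj' : (j : ℕ) ≠ 2 * k + 1 := fun h => hj (Fin.ext h)
    simp only [intModelPhi, Matrix.of_apply]
    split_ifs <;> first | omega | simp

theorem fourierCoeffOn_eq_zero_of_intModel {D ω γ : ℝ} (hD : 0 < D) (hω : ω = 2 * π / D)
    {ℓ : ℕ} (hγ : γ ≠ 0) {N : Fin 2 → ℝ} (hN : N ≠ 0) {e : ℝ → ℝ} (he : Continuous e)
    {η : ℝ → Fin (2 * ℓ + 1) → ℝ} (hηD : η 0 = η D)
    (hη : ∀ t, HasDerivAt η ((intModelPhi ℓ ω).mulVec (η t) + e t • intModelGamma ℓ γ N) t)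
    {n : ℤ} (hn : n.natAbs ≤ ℓ) :
    fourierCoeffOn hD (fun t => (e t : ℂ)) n = 0 := by
  have hcomp (i : Fin (2 * ℓ + 1)) (t : ℝ) : HasDerivAt (fun s => η s i)
      ((intModelPhi ℓ ω *ᵥ η t) i + e t * intModelGamma ℓ γ N i) t :=
    hasDerivAt_pi.1 (hη t) i
  have hei : IntervalIntegrable e volume 0 D := he.intervalIntegrable _ _
  rcases eq_or_ne n 0 with rfl | hn0
  · refine fourierCoeffOn_eq_zero_of_hasDerivAt hD (z := fun t => (η t 0 : ℂ)) (M := γ)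
      (ofReal_ne_zero.2 hγ) (fun t _ => ?_) ⟨hei.1.ofReal, hei.2.ofReal⟩ (by simp only [hηD])
    have hintegrator := (hcomp 0 t).ofReal_comp
    rw [intModelPhi_mulVec_zero] at hintegrator
    refine hintegrator.congr_deriv ?_
    simp [intModelGamma, mul_comm]
  obtain ⟨k, hk⟩ := Nat.exists_eq_add_one_of_ne_zero (Int.natAbs_ne_zero.2 hn0)
  have hkℓ : k < ℓ := by omega
  have hN' : N 0 ≠ 0 ∨ N 1 ≠ 0 := by
    by_contra! h
    exact hN (funext fun i => by fin_cases i <;> simp [h.1, h.2])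
  have hu := hcomp ⟨2 * k + 1, by omega⟩
  have hv := hcomp ⟨2 * k + 2, by omega⟩
  simp only [intModelPhi_mulVec_odd hkℓ, intModelPhi_mulVec_even hkℓ, intModelGamma,
    show 2 * k + 1 ≠ 0 by omega, show (2 * k + 1) % 2 = 1 by omega, show 2 * k + 2 ≠ 0 by omega,
    show (2 * k + 2) % 2 ≠ 1 by omega, ↓reduceIte] at hu hv
  rcases Int.natAbs_eq n with hn | hn <;> rw [hn, hk]
  · refine fourierCoeffOn_eq_zero_of_oscillator hD hN' (fun t _ => (hu t).congr_deriv ?_)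
      (fun t _ => (hv t).congr_deriv ?_) hei (by simp only [hηD]) (by simp only [hηD])
    all_goals rw [hω]; push_cast; ring
  -- `(u, -v)` is an oscillator of the same form at the opposite frequency.
  · refine fourierCoeffOn_eq_zero_of_oscillator hD (q := -N 1)
      (v := fun t => -η t ⟨2 * k + 2, by omega⟩) (by simpa using hN')
      (fun t _ => (hu t).congr_deriv ?_) (fun t _ => (hv t).neg.congr_deriv ?_)
      hei (by simp only [hηD]) (by simp only [hηD])
    all_goals rw [hω]; push_cast; ring

theorem stmt_9_general
    (D : ℝ) (hD : 0 < D) (ℓ : ℕ) (ω : ℝ) (hω : ω = 2 * π / D)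
    (γ : ℝ) (hγ : γ ≠ 0) (N : Fin 2 → ℝ) (hN : N ≠ 0)
    (e : ℝ → ℝ) (he : ContDiff ℝ 1 e) (heper : ∀ t, e (t + D) = e t)
    (ebar : ℝ)
    (hebound : ∀ t ∈ Set.Icc (0:ℝ) D, |deriv e t| ≤ ebar)
    (η : ℝ → Fin (2 * ℓ + 1) → ℝ) (hηper : ∀ t, η (t + D) = η t)
    (hη : ∀ t, HasDerivAt η
      ((intModelPhi ℓ ω).mulVec (η t) + e t • intModelGamma ℓ γ N) t) :
    (1 / D) * (∫ t in (0:ℝ)..D, (e t) ^ 2)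
      ≤ ebar ^ 2 / ((2 * π / D) ^ 2 * (ℓ + 1) ^ 2) := by
  have hwirtinger := integral_norm_sq_le_of_fourierCoeffOn_eq_zero hD
    (f := fun t => (e t : ℂ)) (f' := fun t => ((deriv e t : ℝ) : ℂ))
    (fun t _ => (he.differentiable one_ne_zero t).hasDerivAt.ofReal_comp)
    ((continuous_ofReal.comp (he.continuous_deriv le_rfl)).continuousOn.memLp_restrict_Ioc 2)
    (by simpa using congrArg ofReal (heper 0).symm)
    (fun n hn => fourierCoeffOn_eq_zero_of_intModel hD hω hγ hN he.continuous
      (by simpa using (hηper 0).symm) hη hn)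
  simp only [norm_real, Real.norm_eq_abs, sq_abs, sub_zero] at hwirtinger
  have henergy : ∫ t in (0:ℝ)..D, deriv e t ^ 2 ≤ ebar ^ 2 * |D - 0| := by
    refine (Real.le_norm_self _).trans (norm_integral_le_of_norm_le_const fun t ht => ?_)
    rw [uIoc_of_le hD.le] at ht
    rw [norm_pow, Real.norm_eq_abs]
    exact pow_le_pow_left₀ (abs_nonneg _) (hebound t (Ioc_subset_Icc_self ht)) 2
  rw [sub_zero, abs_of_pos hD] at henergy
  calc (1 / D) * ∫ t in (0:ℝ)..D, e t ^ 2
      ≤ (1 / D) * ((D / (2 * π * (ℓ + 1))) ^ 2 * (ebar ^ 2 * D)) := by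
        gcongr
        exact hwirtinger.trans (by gcongr)
    _ = ebar ^ 2 / ((2 * π / D) ^ 2 * (ℓ + 1) ^ 2) := by field_simp

/-- **Quantitative conclusion of Theorem 1 of the paper (componentwise).** If the
internal-model channel `η' = φη + Γe` admits a differentiable `D`-periodic solution
driven by a continuously differentiable `D`-periodic error `e` with `|e'| ≤ ē` on
`[0, D]`, then the mean-square error satisfies
`(1/D)∫₀^D e² ≤ ē² / ((2π/D)² (ℓ+1)²)`. -/
theorem stmt_9
    (D : ℝ) (hD : 0 < D) (ℓ : ℕ) (ω : ℝ) (hω : ω = 2 * π / D)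
    (γ : ℝ) (hγ : γ ≠ 0) (N : Fin 2 → ℝ) (hN : N ≠ 0)
    (e : ℝ → ℝ) (he : ContDiff ℝ 1 e) (heper : ∀ t, e (t + D) = e t)
    (ebar : ℝ) (hebar : 0 ≤ ebar)
    (hebound : ∀ t ∈ Set.Icc (0:ℝ) D, |deriv e t| ≤ ebar)
    (η : ℝ → Fin (2 * ℓ + 1) → ℝ) (hηper : ∀ t, η (t + D) = η t)
    (hη : ∀ t, HasDerivAt η
      ((intModelPhi ℓ ω).mulVec (η t) + e t • intModelGamma ℓ γ N) t) :
    (1 / D) * (∫ t in (0:ℝ)..D, (e t) ^ 2)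
      ≤ ebar ^ 2 / ((2 * π / D) ^ 2 * (ℓ + 1) ^ 2) :=
  stmt_9_general D hD ℓ ω hω γ hγ N hN e he heper ebar hebound η hηper hη
end

section
/- Let n, m, p, n_w, d, T be positive integers. Let S ∈ ℝ^{n_w×n_w} and s_0, …, s_{d−1} ∈ ℝ satisfy s_0 I + s_1 S + ⋯ + s_{d−1} S^{d−1} + S^d = 0, and assume sup_{t∈ℝ} ‖exp(tS)‖ < ∞. Let A ∈ ℝ^{n×n}, B ∈ ℝ^{n×m}, P ∈ ℝ^{n×n_w}, C_e ∈ ℝ^{p×n}, Q_e ∈ ℝ^{p×n_w}. Define Φ ∈ ℝ^{pd×pd} as the block-companion matrix with blocks Φ_{i,i+1} = I_p for i = 1,…,d−1, last block-row (−s_0 I_p, −s_1 I_p, …, −s_{d−1} I_p), and zeros elsewhere, and G = col(0, …, 0, I_p) ∈ ℝ^{pd×p}. Set 𝒜 = [[A, 0_{n×pd}], [G C_e, Φ]], ℬ = [B; 0_{pd×m}], 𝒫 = [P; G Q_e]. Let U₀ ∈ ℝ^{m×T}, 𝒵₀ ∈ ℝ^{(n+pd)×T}, 𝒵₁ ∈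 ℝ^{(n+pd)×T}, W₀ ∈ ℝ^{n_w×T}, 𝓜 ∈ ℝ^{d×T} satisfy 𝒵₁ = 𝒜𝒵₀ + ℬU₀ + 𝒫W₀ and W₀ = C𝓜 for some C ∈ ℝ^{n_w×d}. Suppose there exist a symmetric positive definite 𝒳 ∈ ℝ^{(n+pd)×(n+pd)} and 𝒴 ∈ ℝ^{T×(n+pd)} with 𝒵₀𝒴 = 𝒳, 𝓜𝒴 = 0, and 𝒵₁𝒴 + (𝒵₁𝒴)ᵀ negative definite, and set K = U₀𝒴𝒳⁻¹ ∈ ℝ^{m×(n+pd)}. Then for every triple of differentiable functions w : ℝ≥0 → ℝ^{n_w}, x : ℝ≥0 → ℝⁿ, η : ℝ≥0 → ℝ^{pd} satisfying ẇ = Sw, ẋ = Ax + B·K·(x,η) + Pw, and η̇ = Φη + G(C_e x + Q_e w), the functions x and η are bounded on [0, ∞) and the regulation error e(t) = C_e x(t) + Q_e w(t) converges to 0 as t → ∞. -/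
/-!
By the data relations the closed-loop matrix `M = 𝒜 + ℬK` satisfies `M𝒳 = 𝒵₁𝒴`, so the SDP
says `M𝒳 + 𝒳Mᵀ ≺ 0` and `z ↦ zᵀ𝒳⁻¹z` is a Lyapunov function: `M` is exponentially stable.
A solution of `ż = Mz` that is bounded on all of `ℝ` must then vanish, while `exp (t • S)` is
bounded, so `Γ ↦ ΓS - MΓ` is injective and the regulator equation `ΓS = MΓ + 𝒫` is solvable.
Its internal-model rows, combined with the annihilating polynomial of `S`, give
`C_e Γ₁ + Q_e = 0`. The deviation `z = (x, η) - Γw` from the steady state solves `ż = Mz`,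
hence decays, so `(x, η)` stays bounded and `e = C_e z₁ → 0`.
-/

open Matrix Filter Metric NormedSpace

section Calculus

variable {ι κ : Type*} [Fintype ι] [Fintype κ]

theorem HasDerivAt.const_mulVec {f : ℝ → κ → ℝ} {f' : κ → ℝ} {t : ℝ} (A : Matrix ι κ ℝ)
    (hf : HasDerivAt f f' t) : HasDerivAt (fun u => A *ᵥ f u) (A *ᵥ f') t :=
  (Matrix.mulVecLin A).toContinuousLinearMap.hasFDerivAt.comp_hasDerivAt t hf

theorem HasDerivAt.sub_mulVec_of_mul_eq {ξ : ℝ → ι → ℝ} {w : ℝ → κ → ℝ} {M : Matrix ι ι ℝ}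
    {R : Matrix ι κ ℝ} {S : Matrix κ κ ℝ} {Γ : Matrix ι κ ℝ} {t : ℝ} (hΓ : Γ * S = M * Γ + R) (hξ : HasDerivAt ξ (M *ᵥ ξ t + R *ᵥ w t) t)
    (hw : HasDerivAt w (S *ᵥ w t) t) :
    HasDerivAt (fun s => ξ s - Γ *ᵥ w s) (M *ᵥ (ξ t - Γ *ᵥ w t)) t := by
  have hval : M *ᵥ (ξ t - Γ *ᵥ w t) = M *ᵥ ξ t + R *ᵥ w t - Γ *ᵥ (S *ᵥ w t) := by
    rw [mulVec_mulVec, hΓ, add_mulVec, mulVec_sub, ← mulVec_mulVec]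
    abel
  rw [hval]
  exact hξ.sub (hw.const_mulVec Γ)

omit [Fintype ι] [Fintype κ] in
theorem HasDerivAt.sumElim {f : ℝ → ι → ℝ} {g : ℝ → κ → ℝ} {f' : ι → ℝ} {g' : κ → ℝ} {t : ℝ}
    (hf : HasDerivAt f f' t) (hg : HasDerivAt g g' t) :
    HasDerivAt (fun u => Sum.elim (f u) (g u)) (Sum.elim f' g') t := by
  rw [hasDerivAt_pi]
  rintro (i | i)
  exacts [hasDerivAt_pi.1 hf i, hasDerivAt_pi.1 hg i]

theorem HasDerivAt.dotProduct {u v : ℝ → ι → ℝ} {u' v' : ι → ℝ} {t : ℝ}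
    (hu : HasDerivAt u u' t) (hv : HasDerivAt v v' t) :
    HasDerivAt (fun s => u s ⬝ᵥ v s) (u' ⬝ᵥ v t + u t ⬝ᵥ v') t := by
  unfold _root_.dotProduct
  rw [← Finset.sum_add_distrib]
  exact HasDerivAt.fun_sum fun j _ => (hasDerivAt_pi.1 hu j).mul (hasDerivAt_pi.1 hv j)

theorem hasDerivAt_exp_smul_mulVec [DecidableEq κ] (S : Matrix κ κ ℝ) (v : κ → ℝ) (t : ℝ) :
    HasDerivAt (fun u : ℝ => exp (u • S) *ᵥ v) (S *ᵥ (exp (t • S) *ᵥ v)) t := by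
  let _ : SeminormedRing (Matrix κ κ ℝ) := Matrix.linftyOpSemiNormedRing
  let _ : NormedRing (Matrix κ κ ℝ) := Matrix.linftyOpNormedRing
  let _ : NormedAlgebra ℝ (Matrix κ κ ℝ) := Matrix.linftyOpNormedAlgebra
  have hexp := hasDerivAt_exp_smul_const' (𝕂 := ℝ) S t
  rw [Matrix.mulVec_mulVec]
  exact ((Matrix.mulVecBilin ℝ ℝ).flip v).toContinuousLinearMap.hasFDerivAt.comp_hasDerivAt t hexp

theorem eq_exp_smul_mulVec_of_hasDerivAt [DecidableEq κ] {S : Matrix κ κ ℝ} {w : ℝ → κ → ℝ}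
    (hw : ∀ t, HasDerivAt w (S *ᵥ w t) t) : w = fun t => exp (t • S) *ᵥ w 0 := by
  refine ODE_solution_unique_univ (v := fun _ => (Matrix.mulVecLin S : (κ → ℝ) →ₗ[ℝ] κ → ℝ))
    (s := fun _ => Set.univ) (t₀ := 0)
    (fun _ => (Matrix.mulVecLin S).toContinuousLinearMap.lipschitz.lipschitzOnWith)
    (fun t => ⟨hw t, trivial⟩) (fun t => ⟨hasDerivAt_exp_smul_mulVec S (w 0) t, trivial⟩) ?_
  simp

theorem le_mul_exp_of_hasDerivAt_le {V V' : ℝ → ℝ} {α : ℝ} (hV : ∀ t, HasDerivAt V (V' t) t)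
    (hle : ∀ t, V' t ≤ -α * V t) {t₀ t : ℝ} (ht : t₀ ≤ t) :
    V t ≤ V t₀ * Real.exp (-α * (t - t₀)) := by
  have hanti : Antitone fun u => V u * Real.exp (α * u) := by
    refine antitone_of_hasDerivAt_nonpos
      (fun u => (hV u).mul (((hasDerivAt_id u).const_mul α).exp)) fun u => ?_
    have := mul_le_mul_of_nonneg_right (hle u) (Real.exp_pos (α * u)).le
    simp only [Pi.zero_apply, mul_one, id]
    nlinarith
  rw [← mul_le_mul_iff_left₀ (Real.exp_pos (α * t)), mul_assoc, ← Real.exp_add]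
  convert hanti ht using 3
  ring

end Calculus

section QuadraticForm

variable {ι : Type*} [Fintype ι]

theorem dotProduct_mulVec_smul_self (N : Matrix ι ι ℝ) (a : ℝ) (z : ι → ℝ) :
    a • z ⬝ᵥ N *ᵥ (a • z) = a ^ 2 * (z ⬝ᵥ N *ᵥ z) := by
  rw [mulVec_smul, smul_dotProduct, dotProduct_smul, smul_eq_mul, smul_eq_mul]
  ring

theorem continuous_dotProduct_mulVec_self (N : Matrix ι ι ℝ) :
    Continuous fun z : ι → ℝ => z ⬝ᵥ N *ᵥ z :=
  continuous_id.dotProduct (continuous_const.matrix_mulVec continuous_id)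

theorem dotProduct_mulVec_self_eq_norm_sq_mul (N : Matrix ι ι ℝ) {z : ι → ℝ} (hz : z ≠ 0) :
    z ⬝ᵥ N *ᵥ z = ‖z‖ ^ 2 * (‖z‖⁻¹ • z ⬝ᵥ N *ᵥ (‖z‖⁻¹ • z)) := by
  rw [dotProduct_mulVec_smul_self, ← mul_assoc, ← mul_pow, mul_inv_cancel₀ (norm_ne_zero_iff.2 hz),
    one_pow, one_mul]

theorem inv_norm_smul_mem_sphere {E : Type*} [NormedAddCommGroup E] [NormedSpace ℝ E] {z : E}
    (hz : z ≠ 0) : ‖z‖⁻¹ • z ∈ sphere (0 : E) 1 :=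
  mem_sphere_zero_iff_norm.2 (norm_smul_inv_norm hz)

theorem exists_dotProduct_mulVec_self_le (N : Matrix ι ι ℝ) :
    ∃ C, ∀ z : ι → ℝ, z ⬝ᵥ N *ᵥ z ≤ C * ‖z‖ ^ 2 := by
  obtain ⟨C, hC⟩ := (isCompact_sphere (0 : ι → ℝ) 1).bddAbove_image
    (continuous_dotProduct_mulVec_self N).continuousOn
  refine ⟨C, fun z => ?_⟩
  rcases eq_or_ne z 0 with rfl | hz
  · simp
  rw [dotProduct_mulVec_self_eq_norm_sq_mul N hz, mul_comm C]
  exact mul_le_mul_of_nonneg_left (hC ⟨_, inv_norm_smul_mem_sphere hz, rfl⟩) (by positivity)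

theorem Matrix.PosDef.exists_mul_norm_sq_le {N : Matrix ι ι ℝ} (hN : N.PosDef) :
    ∃ c, 0 < c ∧ ∀ z : ι → ℝ, c * ‖z‖ ^ 2 ≤ z ⬝ᵥ N *ᵥ z := by
  cases isEmpty_or_nonempty ι
  · exact ⟨1, one_pos, fun z => by simp [Subsingleton.elim z 0]⟩
  obtain ⟨u, hu, hmin⟩ := (isCompact_sphere (0 : ι → ℝ) 1).exists_isMinOn
    (NormedSpace.sphere_nonempty.2 zero_le_one) (continuous_dotProduct_mulVec_self N).continuousOn
  have hu0 : u ≠ 0 := ne_zero_of_mem_sphere one_ne_zero ⟨u, hu⟩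
  refine ⟨u ⬝ᵥ N *ᵥ u, by simpa using hN.dotProduct_mulVec_pos hu0, fun z => ?_⟩
  rcases eq_or_ne z 0 with rfl | hz
  · simp
  rw [dotProduct_mulVec_self_eq_norm_sq_mul N hz, mul_comm (u ⬝ᵥ _)]
  exact mul_le_mul_of_nonneg_left (hmin (inv_norm_smul_mem_sphere hz)) (by positivity)

end QuadraticForm

section Stability

variable {ι : Type*} [Fintype ι]

def Matrix.IsExpStable (M : Matrix ι ι ℝ) : Prop :=
  ∃ c β : ℝ, 0 < c ∧ 0 < β ∧ ∀ z : ℝ → ι → ℝ, (∀ t, HasDerivAt z (M *ᵥ z t) t) →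
    ∀ t₀ t, t₀ ≤ t → ‖z t‖ ≤ c * ‖z t₀‖ * Real.exp (-β * (t - t₀))

theorem HasDerivAt.dotProduct_mulVec_self {z : ℝ → ι → ℝ} {M : Matrix ι ι ℝ} {t : ℝ}
    (Y : Matrix ι ι ℝ) (hz : HasDerivAt z (M *ᵥ z t) t) :
    HasDerivAt (fun s => z s ⬝ᵥ Y *ᵥ z s) (z t ⬝ᵥ (Mᵀ * Y + Y * M) *ᵥ z t) t := by
  convert hz.dotProduct (hz.const_mulVec Y) using 1
  rw [add_mulVec, dotProduct_add, ← mulVec_mulVec, ← mulVec_mulVec, dotProduct_mulVec,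
    vecMul_transpose]

theorem posDef_neg_transpose_mul_inv_add_inv_mul [DecidableEq ι] {M X : Matrix ι ι ℝ}
    (hX : X.PosDef) (hQ : (-(M * X + X * Mᵀ)).PosDef) : (-(Mᵀ * X⁻¹ + X⁻¹ * M)).PosDef := by
  have hdet : IsUnit X.det := (isUnit_iff_isUnit_det X).1 hX.isUnit
  have hY : X⁻¹ᴴ = X⁻¹ := hX.inv.isHermitian.eq
  have : -(Mᵀ * X⁻¹ + X⁻¹ * M) = X⁻¹ᴴ * -(M * X + X * Mᵀ) * X⁻¹ := by
    rw [hY, Matrix.mul_neg, Matrix.neg_mul, Matrix.mul_add, Matrix.add_mul,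
      ← Matrix.mul_assoc X⁻¹ X, nonsing_inv_mul X hdet, Matrix.mul_assoc, Matrix.mul_assoc,
      mul_nonsing_inv X hdet, Matrix.mul_one, Matrix.one_mul, add_comm]
  rw [this]
  exact hQ.conjTranspose_mul_mul_same (mulVec_injective_iff_isUnit.2 hX.inv.isUnit)

theorem Matrix.isExpStable_of_lyapunov [DecidableEq ι] {M X : Matrix ι ι ℝ} (hX : X.PosDef)
    (hQ : (-(M * X + X * Mᵀ)).PosDef) : M.IsExpStable := by
  set Y := X⁻¹
  obtain ⟨a, ha, hNa⟩ := (posDef_neg_transpose_mul_inv_add_inv_mul hX hQ).exists_mul_norm_sq_le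
  obtain ⟨b, hb, hYb⟩ := hX.inv.exists_mul_norm_sq_le
  obtain ⟨B, hB, hYB⟩ : ∃ B, 0 < B ∧ ∀ v : ι → ℝ, v ⬝ᵥ Y *ᵥ v ≤ B * ‖v‖ ^ 2 :=
    let ⟨C, hC⟩ := exists_dotProduct_mulVec_self_le Y
    ⟨max C 1, lt_max_of_lt_right one_pos, fun v => (hC v).trans (by gcongr; exact le_max_left _ _)⟩
  -- `V(v) = v ⬝ᵥ Y *ᵥ v` decreases along solutions at the rate `V' ≤ -(a / B) V`.
  have hV' (v : ι → ℝ) : v ⬝ᵥ (Mᵀ * Y + Y * M) *ᵥ v ≤ -(a / B) * (v ⬝ᵥ Y *ᵥ v) := by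
    have h1 := hNa v
    have h2 := mul_le_mul_of_nonneg_left (hYB v) (div_pos ha hB).le
    rw [neg_mulVec, dotProduct_neg] at h1
    rw [← mul_assoc, div_mul_cancel₀ a hB.ne'] at h2
    linarith
  refine ⟨√(B / b), a / B / 2, by positivity, by positivity, fun z hz t₀ t ht => ?_⟩
  have hV := le_mul_exp_of_hasDerivAt_le (fun s => (hz s).dotProduct_mulVec_self Y)
    (fun s => hV' (z s)) ht
  have hexp : Real.exp (-(a / B / 2) * (t - t₀)) ^ 2 = Real.exp (-(a / B) * (t - t₀)) := by
    rw [← Real.exp_nat_mul]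
    ring_nf
  refine (pow_le_pow_iff_left₀ (norm_nonneg _) (by positivity) two_ne_zero).1 ?_
  rw [mul_pow, mul_pow, Real.sq_sqrt (by positivity), hexp, div_mul_eq_mul_div,
    div_mul_eq_mul_div, le_div_iff₀ hb]
  have := mul_le_mul_of_nonneg_right (hYB (z t₀)) (Real.exp_pos (-(a / B) * (t - t₀))).le
  nlinarith [hYb (z t)]

variable {M : Matrix ι ι ℝ} {z : ℝ → ι → ℝ}

theorem Matrix.IsExpStable.exists_norm_le (hM : M.IsExpStable)
    (hz : ∀ t, HasDerivAt z (M *ᵥ z t) t) : ∃ C, ∀ t, 0 ≤ t → ‖z t‖ ≤ C := by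
  obtain ⟨c, β, hc, hβ, hdecay⟩ := hM
  refine ⟨c * ‖z 0‖, fun t ht => (hdecay z hz 0 t ht).trans ?_⟩
  exact mul_le_of_le_one_right (by positivity) (Real.exp_le_one_iff.2 (by nlinarith))

theorem Matrix.IsExpStable.tendsto_zero (hM : M.IsExpStable)
    (hz : ∀ t, HasDerivAt z (M *ᵥ z t) t) : Tendsto z atTop (nhds 0) := by
  obtain ⟨c, β, hc, hβ, hdecay⟩ := hM
  have hlim : Tendsto (fun t => c * ‖z 0‖ * Real.exp (-β * t)) atTop (nhds 0) := by
    simpa using (Real.tendsto_exp_atBot.comp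
      (tendsto_id.const_mul_atTop_of_neg (neg_neg_of_pos hβ))).const_mul (c * ‖z 0‖)
  refine squeeze_zero_norm' ?_ hlim
  filter_upwards [eventually_ge_atTop 0] with t ht
  simpa using hdecay z hz 0 t ht

theorem Matrix.IsExpStable.eq_zero_of_bounded (hM : M.IsExpStable)
    (hz : ∀ t, HasDerivAt z (M *ᵥ z t) t) (hbdd : ∃ C, ∀ t, ‖z t‖ ≤ C) (t : ℝ) : z t = 0 := by
  obtain ⟨c, β, hc, hβ, hdecay⟩ := hM
  obtain ⟨C, hC⟩ := hbdd
  have hlim : Tendsto (fun t₀ => c * C * Real.exp (-β * (t - t₀))) atBot (nhds 0) := by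
    have harg : Tendsto (fun t₀ => -β * (t - t₀)) atBot atBot :=
      (tendsto_atBot_add_const_right _ (-β * t) (tendsto_id.const_mul_atBot hβ)).congr
        fun t₀ => by simp only [id]; ring
    simpa using (Real.tendsto_exp_atBot.comp harg).const_mul (c * C)
  refine norm_le_zero_iff.1 (ge_of_tendsto hlim ?_)
  filter_upwards [eventually_le_atBot t] with t₀ ht₀
  exact (hdecay z hz t₀ t ht₀).trans (by gcongr; exact hC t₀)

end Stability

section InternalModel

variable {R κ : Type*} [CommRing R] [Fintype κ] [DecidableEq κ] {d p : ℕ}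

theorem eq_zero_of_mul_eq_companion_mul_add (hd : 0 < d) (S : Matrix κ κ R) (s : Fin d → R)
    (hS : (∑ i : Fin d, s i • S ^ (i : ℕ)) + S ^ d = 0)
    {Φ : Matrix (Fin d × Fin p) (Fin d × Fin p) R}
    (hΦ : ∀ (i j : Fin d) (a b : Fin p), Φ (i, a) (j, b) = if a = b then
      (if (i : ℕ) = d - 1 then -s j else if (j : ℕ) = (i : ℕ) + 1 then 1 else 0) else 0)
    {G : Matrix (Fin d × Fin p) (Fin p) R}
    (hG : ∀ (i : Fin d) (a b : Fin p), G (i, a) b = if (i : ℕ) = d - 1 ∧ a = b then 1 else 0)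
    {Y : Matrix (Fin d × Fin p) κ R} {E : Matrix (Fin p) κ R}
    (h : Y * S = Φ * Y + G * E) : E = 0 := by
  obtain ⟨d, rfl⟩ : ∃ d', d = d' + 1 := ⟨d - 1, by omega⟩
  -- The block rows `ρ i` of `Y` satisfy `ρ i = ρ 0 * S ^ i`, so `E = ρ 0 * (∑ sᵢ Sⁱ + S ^ d) = 0`.
  set ρ : Fin (d + 1) → Matrix (Fin p) κ R := fun i => of fun a c => Y (i, a) c
  have hrow (i : Fin (d + 1)) (a : Fin p) (c : κ) := congrFun (congrFun h (i, a)) c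
  simp only [mul_apply, Matrix.add_apply, hΦ, hG, add_tsub_cancel_right, ite_mul, neg_mul, one_mul,
    zero_mul, Fintype.sum_prod_type, Finset.sum_ite_eq, Finset.mem_univ, ↓reduceIte,
    Finset.sum_ite_irrel, Finset.sum_neg_distrib] at hrow
  have hshift (i : Fin d) : ρ i.succ = ρ i.castSucc * S := by
    ext a c
    have := hrow i.castSucc a c
    simp only [Fin.val_castSucc, i.isLt.ne, if_false, false_and, Finset.sum_const_zero, add_zero,
      ← Fin.val_succ, ← Fin.ext_iff, Finset.sum_ite_eq', Finset.mem_univ, if_true] at this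
    simpa [ρ, mul_apply] using this.symm
  have hlast : ρ (Fin.last d) * S = -∑ j, s j • ρ j + E := by
    ext a c
    simpa [ρ, mul_apply, Matrix.sum_apply] using hrow (Fin.last d) a c
  have hpow (i : Fin (d + 1)) : ρ i = ρ 0 * S ^ (i : ℕ) := by
    induction i using Fin.induction with
    | zero => simp
    | succ i ih => rw [hshift, ih, Fin.val_succ, Fin.val_castSucc, pow_succ, Matrix.mul_assoc]
  calc E = ρ (Fin.last d) * S + ∑ j, s j • ρ j := by rw [hlast]; abel
    _ = ρ 0 * S ^ (d + 1) + ∑ j, s j • (ρ 0 * S ^ (j : ℕ)) := by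
      rw [hpow (Fin.last d), Fin.val_last, Matrix.mul_assoc, ← pow_succ]
      exact congrArg _ (Finset.sum_congr rfl fun j _ => by rw [← hpow])
    _ = ρ 0 * ((∑ j : Fin (d + 1), s j • S ^ (j : ℕ)) + S ^ (d + 1)) := by
      simp only [Matrix.mul_add, Matrix.mul_sum, Matrix.mul_smul]
      abel
    _ = 0 := by rw [hS, Matrix.mul_zero]

end InternalModel

theorem closedLoop_mul_eq_of_data {R n m q r T : Type*} [CommRing R] [Fintype n] [Fintype m]
    [Fintype q] [Fintype r] [Fintype T] {A : Matrix n n R} {B : Matrix n m R} {P : Matrix n q R}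
    {K : Matrix m n R} {U₀ : Matrix m T R} {Z₀ Z₁ : Matrix n T R} {W₀ : Matrix q T R}
    {L : Matrix r T R} {C : Matrix q r R} {X : Matrix n n R} {Y : Matrix T n R}
    (hdata : Z₁ = A * Z₀ + B * U₀ + P * W₀) (hW₀ : W₀ = C * L) (hZ₀ : Z₀ * Y = X)
    (hL : L * Y = 0) (hK : K * X = U₀ * Y) :
    (A + B * K) * X = Z₁ * Y := by
  rw [hdata, hW₀, Matrix.add_mul, Matrix.add_mul, Matrix.add_mul, Matrix.mul_assoc A,
    Matrix.mul_assoc B, Matrix.mul_assoc P, Matrix.mul_assoc B, Matrix.mul_assoc C, hZ₀, hK, hL,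
    Matrix.mul_zero, Matrix.mul_zero, add_zero]

section Blocks

variable {R : Type*} [CommRing R] {n₁ n₂ m k : Type*} [Fintype n₁] [Fintype n₂] [Fintype m]
  {A : Matrix n₁ n₁ R} {B : Matrix n₁ m R} {C : Matrix n₂ n₁ R} {D : Matrix n₂ n₂ R}
  {K : Matrix m (n₁ ⊕ n₂) R} {P : Matrix n₁ k R} {Q : Matrix n₂ k R}

theorem toRows₂_mul_eq_of_mul_eq [Fintype k] {S : Matrix k k R} {Γ : Matrix (n₁ ⊕ n₂) k R}
    (h : Γ * S = (fromBlocks A 0 C D + fromRows B 0 * K) * Γ + fromRows P Q) :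
    Γ.toRows₂ * S = C * Γ.toRows₁ + D * Γ.toRows₂ + Q := by
  obtain ⟨Γ₁, Γ₂, rfl⟩ : ∃ Γ₁ Γ₂, Γ = fromRows Γ₁ Γ₂ := ⟨_, _, (fromRows_toRows Γ).symm⟩
  rw [Matrix.add_mul, fromBlocks_mul_fromRows, Matrix.mul_assoc, fromRows_mul, fromRows_mul] at h
  ext i j
  simpa using congrFun (congrFun h (Sum.inr i)) j

theorem fromBlocks_add_fromRows_mul_mulVec_add [Fintype k] (x : n₁ → R) (y : n₂ → R) (w : k → R) :
    (fromBlocks A 0 C D + fromRows B 0 * K) *ᵥ Sum.elim x y + fromRows P Q *ᵥ w =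
      Sum.elim (A *ᵥ x + B *ᵥ (K *ᵥ Sum.elim x y) + P *ᵥ w) (D *ᵥ y + (C *ᵥ x + Q *ᵥ w)) := by
  rw [add_mulVec, fromBlocks_mulVec, ← mulVec_mulVec, fromRows_mulVec, fromRows_mulVec]
  ext (i | i) <;> simp [add_assoc, add_left_comm]

end Blocks

attribute [local instance] Matrix.normedAddCommGroup

section ExpBounded

variable {ι κ : Type*} [Fintype ι] [Fintype κ]

theorem Matrix.norm_mulVec_le_card_mul {α : Type*} [NormedRing α] (A : Matrix ι κ α) (v : κ → α) :
    ‖A *ᵥ v‖ ≤ Fintype.card κ * ‖A‖ * ‖v‖ := by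
  refine pi_norm_le_iff_of_nonneg (by positivity) |>.2 fun i => ?_
  calc ‖(A *ᵥ v) i‖ ≤ ∑ j, ‖A i j‖ * ‖v j‖ :=
        (norm_sum_le _ _).trans (Finset.sum_le_sum fun j _ => norm_mul_le _ _)
    _ ≤ ∑ _j : κ, ‖A‖ * ‖v‖ := Finset.sum_le_sum fun j _ =>
        mul_le_mul (norm_entry_le_entrywise_sup_norm A) (norm_le_pi_norm v j) (norm_nonneg _)
          (norm_nonneg _)
    _ = Fintype.card κ * ‖A‖ * ‖v‖ := by simp [mul_assoc]

omit [Fintype ι] [Fintype κ] in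
theorem norm_le_norm_sumElim {E : Type*} [SeminormedAddCommGroup E] [Fintype ι] [Fintype κ]
    (f : ι → E) (g : κ → E) : ‖f‖ ≤ ‖Sum.elim f g‖ ∧ ‖g‖ ≤ ‖Sum.elim f g‖ :=
  ⟨(pi_norm_le_iff_of_nonneg (norm_nonneg _)).2 fun i => norm_le_pi_norm (Sum.elim f g) (.inl i),
    (pi_norm_le_iff_of_nonneg (norm_nonneg _)).2 fun i => norm_le_pi_norm (Sum.elim f g) (.inr i)⟩

variable [DecidableEq κ] {S : Matrix κ κ ℝ}

theorem exists_norm_exp_smul_mulVec_le (hS : ∃ c : ℝ, ∀ t : ℝ, ‖exp (t • S)‖ ≤ c) (v : κ → ℝ) :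
    ∃ C, ∀ t : ℝ, ‖exp (t • S) *ᵥ v‖ ≤ C := by
  obtain ⟨c, hc⟩ := hS
  exact ⟨Fintype.card κ * c * ‖v‖, fun t =>
    (norm_mulVec_le_card_mul _ v).trans (by gcongr; exact hc t)⟩

theorem Matrix.IsExpStable.exists_mul_eq_mul_add {M : Matrix ι ι ℝ} (hM : M.IsExpStable)
    (hS : ∃ c : ℝ, ∀ t : ℝ, ‖exp (t • S)‖ ≤ c) (R : Matrix ι κ ℝ) :
    ∃ Γ : Matrix ι κ ℝ, Γ * S = M * Γ + R := by
  let L : Matrix ι κ ℝ →ₗ[ℝ] Matrix ι κ ℝ := mulRightLinearMap ι ℝ S - mulLeftLinearMap κ ℝ M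
  -- If `Z * S = M * Z`, each `t ↦ Z *ᵥ exp (t • S) *ᵥ v` solves `ż = M z` and is bounded on `ℝ`.
  have hinj : Function.Injective L := by
    refine (injective_iff_map_eq_zero L).2 fun Z hZ => ext_of_mulVec_single fun j => ?_
    have hZS : Z * S = M * Z := sub_eq_zero.1 hZ
    obtain ⟨C, hC⟩ := exists_norm_exp_smul_mulVec_le hS (Pi.single j 1)
    have hsol (t : ℝ) : HasDerivAt (fun s => Z *ᵥ (exp (s • S) *ᵥ Pi.single j 1))
        (M *ᵥ (Z *ᵥ (exp (t • S) *ᵥ Pi.single j 1))) t := by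
      rw [mulVec_mulVec, ← hZS, ← mulVec_mulVec]
      exact (hasDerivAt_exp_smul_mulVec S _ t).const_mulVec Z
    simpa only [zero_smul, exp_zero, one_mulVec, zero_mulVec] using hM.eq_zero_of_bounded hsol
      ⟨_, fun t => (norm_mulVec_le_card_mul Z _).trans
        (mul_le_mul_of_nonneg_left (hC t) (by positivity))⟩ 0
  obtain ⟨Γ, hΓ⟩ := LinearMap.injective_iff_surjective.1 hinj R
  exact ⟨Γ, eq_add_of_sub_eq' hΓ⟩

theorem Matrix.IsExpStable.exists_norm_add_mulVec_le {M : Matrix ι ι ℝ} (hM : M.IsExpStable)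
    {z : ℝ → ι → ℝ} (hz : ∀ t, HasDerivAt z (M *ᵥ z t) t)
    (hS : ∃ c : ℝ, ∀ t : ℝ, ‖exp (t • S)‖ ≤ c) {w : ℝ → κ → ℝ}
    (hw : ∀ t, HasDerivAt w (S *ᵥ w t) t) (Γ : Matrix ι κ ℝ) :
    ∃ C, ∀ t, 0 ≤ t → ‖z t + Γ *ᵥ w t‖ ≤ C := by
  obtain ⟨Cz, hCz⟩ := hM.exists_norm_le hz
  obtain ⟨Cw, hCw⟩ := exists_norm_exp_smul_mulVec_le hS (w 0)
  refine ⟨Cz + Fintype.card κ * ‖Γ‖ * Cw, fun t ht => (norm_add_le _ _).trans ?_⟩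
  rw [congrFun (eq_exp_smul_mulVec_of_hasDerivAt hw) t]
  gcongr
  · exact hCz t ht
  · exact (norm_mulVec_le_card_mul Γ _).trans (by gcongr; exact hCw t)

end ExpBounded

theorem stmt_11_general
    (n m p n_w d T : ℕ)
    (hd : 0 < d)
    (S : Matrix (Fin n_w) (Fin n_w) ℝ) (s : Fin d → ℝ)
    (hminpoly : (∑ i : Fin d, s i • S ^ (i : ℕ)) + S ^ d = 0)
    (hSbounded : ∃ c : ℝ, ∀ t : ℝ, ‖NormedSpace.exp (t • S)‖ ≤ c)
    (A : Matrix (Fin n) (Fin n) ℝ) (B : Matrix (Fin n) (Fin m) ℝ)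
    (P : Matrix (Fin n) (Fin n_w) ℝ)
    (C_e : Matrix (Fin p) (Fin n) ℝ) (Q_e : Matrix (Fin p) (Fin n_w) ℝ)
    (Φ : Matrix (Fin d × Fin p) (Fin d × Fin p) ℝ)
    (hΦ : ∀ (i j : Fin d) (a b : Fin p),
      Φ (i, a) (j, b) =
        if a = b then
          (if (i : ℕ) = d - 1 then -s j
           else if (j : ℕ) = (i : ℕ) + 1 then 1 else 0)
        else 0)
    (G : Matrix (Fin d × Fin p) (Fin p) ℝ)
    (hG : ∀ (i : Fin d) (a b : Fin p), G (i, a) b = if (i : ℕ) = d - 1 ∧ a = b then 1 else 0)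
    (𝒜 : Matrix (Fin n ⊕ Fin d × Fin p) (Fin n ⊕ Fin d × Fin p) ℝ)
    (h𝒜 : 𝒜 = fromBlocks A 0 (G * C_e) Φ)
    (ℬ : Matrix (Fin n ⊕ Fin d × Fin p) (Fin m) ℝ)
    (hℬ : ℬ = fromRows B (0 : Matrix (Fin d × Fin p) (Fin m) ℝ))
    (Pm : Matrix (Fin n ⊕ Fin d × Fin p) (Fin n_w) ℝ)
    (hPm : Pm = fromRows P (G * Q_e))
    (U₀ : Matrix (Fin m) (Fin T) ℝ)
    (𝒵₀ 𝒵₁ : Matrix (Fin n ⊕ Fin d × Fin p) (Fin T) ℝ)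
    (W₀ : Matrix (Fin n_w) (Fin T) ℝ)
    (hdata : 𝒵₁ = 𝒜 * 𝒵₀ + ℬ * U₀ + Pm * W₀)
    (𝓜 : Matrix (Fin d) (Fin T) ℝ) (C : Matrix (Fin n_w) (Fin d) ℝ) (hW₀ : W₀ = C * 𝓜)
    (𝒳 : Matrix (Fin n ⊕ Fin d × Fin p) (Fin n ⊕ Fin d × Fin p) ℝ) (h𝒳 : 𝒳.PosDef)
    (𝒴 : Matrix (Fin T) (Fin n ⊕ Fin d × Fin p) ℝ)
    (hSDP1 : 𝒵₀ * 𝒴 = 𝒳) (hSDP2 : 𝓜 * 𝒴 = 0)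
    (hSDP3 : (-(𝒵₁ * 𝒴 + (𝒵₁ * 𝒴)ᵀ)).PosDef)
    (K : Matrix (Fin m) (Fin n ⊕ Fin d × Fin p) ℝ) (hK : K = U₀ * 𝒴 * 𝒳⁻¹) :
    ∀ (w : ℝ → Fin n_w → ℝ) (x : ℝ → Fin n → ℝ) (η : ℝ → Fin d × Fin p → ℝ),
      (∀ t : ℝ, HasDerivAt w (S.mulVec (w t)) t) →
      (∀ t : ℝ, HasDerivAt x
        (A.mulVec (x t) + B.mulVec (K.mulVec (Sum.elim (x t) (η t))) + P.mulVec (w t)) t) →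
      (∀ t : ℝ, HasDerivAt η
        (Φ.mulVec (η t) + G.mulVec (C_e.mulVec (x t) + Q_e.mulVec (w t))) t) →
      (∃ c : ℝ, ∀ t : ℝ, 0 ≤ t → ‖x t‖ ≤ c ∧ ‖η t‖ ≤ c) ∧
        Tendsto (fun t : ℝ => C_e.mulVec (x t) + Q_e.mulVec (w t)) atTop (nhds 0) := by
  intro w x η hw hx hη
  subst h𝒜 hℬ hPm
  set M := fromBlocks A 0 (G * C_e) Φ + fromRows B 0 * K
  have hK𝒳 : K * 𝒳 = U₀ * 𝒴 :=
    hK ▸ nonsing_inv_mul_cancel_right 𝒳 _ ((isUnit_iff_isUnit_det 𝒳).1 h𝒳.isUnit)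
  have hMX : M * 𝒳 = 𝒵₁ * 𝒴 := closedLoop_mul_eq_of_data hdata hW₀ hSDP1 hSDP2 hK𝒳
  have hM : M.IsExpStable := by
    refine isExpStable_of_lyapunov h𝒳 ?_
    rwa [← hMX, transpose_mul, (isHermitian_iff_isSymm.1 h𝒳.isHermitian).eq] at hSDP3
  obtain ⟨Γ, hΓ⟩ := hM.exists_mul_eq_mul_add hSbounded (fromRows P (G * Q_e))
  have hreg : C_e * Γ.toRows₁ + Q_e = 0 := by
    refine eq_zero_of_mul_eq_companion_mul_add hd S s hminpoly hΦ hG (Y := Γ.toRows₂) ?_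
    rw [toRows₂_mul_eq_of_mul_eq hΓ, Matrix.mul_add, Matrix.mul_assoc]
    abel
  set z := fun t => Sum.elim (x t) (η t) - Γ *ᵥ w t
  have hz (t : ℝ) : HasDerivAt z (M *ᵥ z t) t := by
    refine HasDerivAt.sub_mulVec_of_mul_eq hΓ ?_ (hw t)
    rw [fromBlocks_add_fromRows_mul_mulVec_add, ← mulVec_mulVec, ← mulVec_mulVec, ← mulVec_add]
    exact (hx t).sumElim (hη t)
  refine ⟨?_, ?_⟩
  · obtain ⟨c, hc⟩ := hM.exists_norm_add_mulVec_le hz hSbounded hw Γ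
    refine ⟨c, fun t ht => ?_⟩
    obtain ⟨hxξ, hηξ⟩ := norm_le_norm_sumElim (x t) (η t)
    have hξ : Sum.elim (x t) (η t) = z t + Γ *ᵥ w t := by simp [z]
    rw [hξ] at hxξ hηξ
    exact ⟨hxξ.trans (hc t ht), hηξ.trans (hc t ht)⟩
  · have herr (t : ℝ) : C_e *ᵥ (z t ∘ Sum.inl) = C_e *ᵥ x t + Q_e *ᵥ w t := by
      have hz₁ : z t ∘ Sum.inl = x t - Γ.toRows₁ *ᵥ w t := rfl
      rw [hz₁, mulVec_sub, mulVec_mulVec, eq_neg_of_add_eq_zero_left hreg, neg_mulVec,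
        sub_neg_eq_add]
    have hcont : Continuous fun v : Fin n ⊕ Fin d × Fin p → ℝ => C_e *ᵥ (v ∘ Sum.inl) :=
      continuous_const.matrix_mulVec (continuous_pi fun i => continuous_apply (Sum.inl i))
    exact ((hcont.tendsto' 0 0 (by simp)).comp (hM.tendsto_zero hz)).congr herr

/-- **Theorem 2 of the paper, forward direction (data-driven exact linear output
regulation).** The exosystem matrix `S` is annihilated by the monic polynomial
`s₀ + s₁λ + ⋯ + λ^d` and has bounded matrix exponential (Assumption 1). `(Φ, G)` is
the `p`-copy internal model built from that polynomial, with state indexed by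
`Fin d × Fin p` (block row index in `Fin d`). If the data satisfy the consistency
relation and the SDP (29) of the paper is feasible, then the feedback gain
`K = U₀𝒴𝒳⁻¹` solves the output regulation problem: closed-loop solutions are bounded
on `[0, ∞)` and the regulation error `e = C_e x + Q_e w` converges to zero. -/
theorem stmt_11
    (n m p n_w d T : ℕ)
    (hn : 0 < n) (hm : 0 < m) (hp : 0 < p) (hnw : 0 < n_w) (hd : 0 < d) (hT : 0 < T)
    (S : Matrix (Fin n_w) (Fin n_w) ℝ) (s : Fin d → ℝ)
    (hminpoly : (∑ i : Fin d, s i • S ^ (i : ℕ)) + S ^ d = 0)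
    (hSbounded : ∃ c : ℝ, ∀ t : ℝ, ‖NormedSpace.exp (t • S)‖ ≤ c)
    (A : Matrix (Fin n) (Fin n) ℝ) (B : Matrix (Fin n) (Fin m) ℝ)
    (P : Matrix (Fin n) (Fin n_w) ℝ)
    (C_e : Matrix (Fin p) (Fin n) ℝ) (Q_e : Matrix (Fin p) (Fin n_w) ℝ)
    (Φ : Matrix (Fin d × Fin p) (Fin d × Fin p) ℝ)
    (hΦ : ∀ (i j : Fin d) (a b : Fin p),
      Φ (i, a) (j, b) =
        if a = b then
          (if (i : ℕ) = d - 1 then -s j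
           else if (j : ℕ) = (i : ℕ) + 1 then 1 else 0)
        else 0)
    (G : Matrix (Fin d × Fin p) (Fin p) ℝ)
    (hG : ∀ (i : Fin d) (a b : Fin p), G (i, a) b = if (i : ℕ) = d - 1 ∧ a = b then 1 else 0)
    (𝒜 : Matrix (Fin n ⊕ Fin d × Fin p) (Fin n ⊕ Fin d × Fin p) ℝ)
    (h𝒜 : 𝒜 = fromBlocks A 0 (G * C_e) Φ)
    (ℬ : Matrix (Fin n ⊕ Fin d × Fin p) (Fin m) ℝ)
    (hℬ : ℬ = fromRows B (0 : Matrix (Fin d × Fin p) (Fin m) ℝ))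
    (Pm : Matrix (Fin n ⊕ Fin d × Fin p) (Fin n_w) ℝ)
    (hPm : Pm = fromRows P (G * Q_e))
    (U₀ : Matrix (Fin m) (Fin T) ℝ)
    (𝒵₀ 𝒵₁ : Matrix (Fin n ⊕ Fin d × Fin p) (Fin T) ℝ)
    (W₀ : Matrix (Fin n_w) (Fin T) ℝ)
    (hdata : 𝒵₁ = 𝒜 * 𝒵₀ + ℬ * U₀ + Pm * W₀)
    (𝓜 : Matrix (Fin d) (Fin T) ℝ) (C : Matrix (Fin n_w) (Fin d) ℝ) (hW₀ : W₀ = C * 𝓜)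
    (𝒳 : Matrix (Fin n ⊕ Fin d × Fin p) (Fin n ⊕ Fin d × Fin p) ℝ) (h𝒳 : 𝒳.PosDef)
    (𝒴 : Matrix (Fin T) (Fin n ⊕ Fin d × Fin p) ℝ)
    (hSDP1 : 𝒵₀ * 𝒴 = 𝒳) (hSDP2 : 𝓜 * 𝒴 = 0)
    (hSDP3 : (-(𝒵₁ * 𝒴 + (𝒵₁ * 𝒴)ᵀ)).PosDef)
    (K : Matrix (Fin m) (Fin n ⊕ Fin d × Fin p) ℝ) (hK : K = U₀ * 𝒴 * 𝒳⁻¹) :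
    ∀ (w : ℝ → Fin n_w → ℝ) (x : ℝ → Fin n → ℝ) (η : ℝ → Fin d × Fin p → ℝ),
      (∀ t : ℝ, HasDerivAt w (S.mulVec (w t)) t) →
      (∀ t : ℝ, HasDerivAt x
        (A.mulVec (x t) + B.mulVec (K.mulVec (Sum.elim (x t) (η t))) + P.mulVec (w t)) t) →
      (∀ t : ℝ, HasDerivAt η
        (Φ.mulVec (η t) + G.mulVec (C_e.mulVec (x t) + Q_e.mulVec (w t))) t) →
      (∃ c : ℝ, ∀ t : ℝ, 0 ≤ t → ‖x t‖ ≤ c ∧ ‖η t‖ ≤ c) ∧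
        Tendsto (fun t : ℝ => C_e.mulVec (x t) + Q_e.mulVec (w t)) atTop (nhds 0) :=
  stmt_11_general n m p n_w d T hd S s hminpoly hSbounded A B P C_e Q_e Φ hΦ G hG 𝒜 h𝒜 ℬ hℬ Pm hPm
    U₀ 𝒵₀ 𝒵₁ W₀ hdata 𝓜 C hW₀ 𝒳 h𝒳 𝒴 hSDP1 hSDP2 hSDP3 K hK
end
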